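/- Let x ∈ 𝔷₄ satisfy x₁₃ = x₃₁ (entries at positions (1,3) and (3,1)). Let g, h ∈ S₄,₂ and suppose that g·x·h^τ ∈ 𝔷₄. Then the (1,3) entry of g·x·h^τ equals its (3,1) entry. -/

import Mathlib

open Matrix

/-- Assembles a `3 × 3` grid of `2 × 2` blocks into a `6 × 6` matrix. -/
def asm {𝕂 : Type*} [RCLike 𝕂] (m : Matrix (Fin 3) (Fin 3) (Matrix (Fin 2) (Fin 2) 𝕂)) :
    Matrix (Fin 6) (Fin 6) 𝕂 :=
  Matrix.of fun i j =>
    m ⟨(i : ℕ) / 2, by have := i.2; omega⟩ ⟨(j : ℕ) / 2, by have := j.2; omega⟩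
      ⟨(i : ℕ) % 2, by omega⟩ ⟨(j : ℕ) % 2, by omega⟩

/-- The subgroup `S₄,₂ ⊆ GL₆(𝕂)` of matrices of the block form `[[a,b,0],[0,a,0],[0,0,a]]`
with `a ∈ GL₂(𝕂)` and `b ∈ gl₂(𝕂)`. -/
def S42 (𝕂 : Type*) [RCLike 𝕂] : Set (Matrix (Fin 6) (Fin 6) 𝕂) :=
  {s | ∃ a b : Matrix (Fin 2) (Fin 2) 𝕂, IsUnit a.det ∧
    s = asm !![a, b, 0; 0, a, 0; 0, 0, a]}

/-- The set `𝔷₄` of invertible `6 × 6` matrices whose only possibly nonzero entries are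
those in the upper left `3 × 3` corner except the `(3,3)` one, together with the
entries at (1-indexed) positions `(4,4)`, `(5,6)`, `(6,5)`, which are equal to `1`. -/
def z4set (𝕂 : Type*) [RCLike 𝕂] : Set (Matrix (Fin 6) (Fin 6) 𝕂) :=
  {x | IsUnit x.det ∧ x 2 2 = 0 ∧ x 3 3 = 1 ∧ x 4 5 = 1 ∧ x 5 4 = 1 ∧
    ∀ i j : Fin 6, x i j ≠ 0 →
      ((i : ℕ) < 3 ∧ (j : ℕ) < 3) ∨ (i = 3 ∧ j = 3) ∨ (i = 4 ∧ j = 5) ∨ (i = 5 ∧ j = 4)}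

/-!
Write `g` and `h` with diagonal blocks `a` and `c`. The middle diagonal block of `x` is
`e₂ e₂ᵀ`, so the middle diagonal block of `g x hᵀ` is the rank-one matrix `(a e₂)(c e₂)ᵀ`;
for `g x hᵀ ∈ 𝔷₄` it must again be `e₂ e₂ᵀ`, which forces `a₁₂ = c₁₂ = 0` (indices 1-based). Once these vanish,
the `(1,3)` and `(3,1)` entries of `g x hᵀ` are `a₁₁ c₁₁ x₁₃` and `a₁₁ c₁₁ x₃₁`.
-/

section BlockForms

variable {R : Type*} [CommRing R]

theorem eq_zero_and_eq_zero_of_mul_eq_one {u₀ u₁ v₀ v₁ : R}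
    (h₀₁ : u₀ * v₁ = 0) (h₁₀ : u₁ * v₀ = 0) (h₁₁ : u₁ * v₁ = 1) : u₀ = 0 ∧ v₀ = 0 :=
  ⟨by linear_combination u₁ * h₀₁ - u₀ * h₁₁, by linear_combination v₁ * h₁₀ - v₀ * h₁₁⟩

def s42Mat (a b : Matrix (Fin 2) (Fin 2) R) : Matrix (Fin 6) (Fin 6) R :=
  !![a 0 0, a 0 1, b 0 0, b 0 1, 0, 0;
     a 1 0, a 1 1, b 1 0, b 1 1, 0, 0;
     0, 0, a 0 0, a 0 1, 0, 0;
     0, 0, a 1 0, a 1 1, 0, 0;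
     0, 0, 0, 0, a 0 0, a 0 1;
     0, 0, 0, 0, a 1 0, a 1 1]

/-- The entry `p 2 2` is ignored, as `x₃₃ = 0` on `𝔷₄`. -/
def z4Mat (p : Matrix (Fin 3) (Fin 3) R) : Matrix (Fin 6) (Fin 6) R :=
  !![p 0 0, p 0 1, p 0 2, 0, 0, 0;
     p 1 0, p 1 1, p 1 2, 0, 0, 0;
     p 2 0, p 2 1, 0, 0, 0, 0;
     0, 0, 0, 1, 0, 0;
     0, 0, 0, 0, 0, 1;
     0, 0, 0, 0, 1, 0]

variable (a b c d : Matrix (Fin 2) (Fin 2) R) (p : Matrix (Fin 3) (Fin 3) R)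

theorem s42Mat_mul_z4Mat_mul_transpose_apply_zero_two :
    (s42Mat a b * z4Mat p * (s42Mat c d)ᵀ) 0 2 =
      (a 0 0 * p 0 2 + a 0 1 * p 1 2) * c 0 0 + b 0 1 * c 0 1 := by
  simp [s42Mat, z4Mat, mul_apply, Fin.sum_univ_succ]

theorem s42Mat_mul_z4Mat_mul_transpose_apply_two_zero :
    (s42Mat a b * z4Mat p * (s42Mat c d)ᵀ) 2 0 =
      a 0 0 * (p 2 0 * c 0 0 + p 2 1 * c 0 1) + a 0 1 * d 0 1 := by
  simp [s42Mat, z4Mat, mul_apply, Fin.sum_univ_succ]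
  ring

theorem s42Mat_mul_z4Mat_mul_transpose_apply_two_three :
    (s42Mat a b * z4Mat p * (s42Mat c d)ᵀ) 2 3 = a 0 1 * c 1 1 := by
  simp [s42Mat, z4Mat, mul_apply, Fin.sum_univ_succ]

theorem s42Mat_mul_z4Mat_mul_transpose_apply_three_two :
    (s42Mat a b * z4Mat p * (s42Mat c d)ᵀ) 3 2 = a 1 1 * c 0 1 := by
  simp [s42Mat, z4Mat, mul_apply, Fin.sum_univ_succ]

theorem s42Mat_mul_z4Mat_mul_transpose_apply_three_three :
    (s42Mat a b * z4Mat p * (s42Mat c d)ᵀ) 3 3 = a 1 1 * c 1 1 := by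
  simp [s42Mat, z4Mat, mul_apply, Fin.sum_univ_succ]

end BlockForms

section Membership

variable {𝕂 : Type*} [RCLike 𝕂]

theorem apply_eq_zero_of_mem_z4set {x : Matrix (Fin 6) (Fin 6) 𝕂} (hx : x ∈ z4set 𝕂)
    {i j : Fin 6}
    (hij : ¬(((i : ℕ) < 3 ∧ (j : ℕ) < 3) ∨ (i = 3 ∧ j = 3) ∨ (i = 4 ∧ j = 5) ∨ (i = 5 ∧ j = 4))) :
    x i j = 0 :=
  not_imp_comm.mp (hx.2.2.2.2.2 i j) hij

theorem exists_eq_z4Mat_of_mem_z4set {x : Matrix (Fin 6) (Fin 6) 𝕂} (hx : x ∈ z4set 𝕂) :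
    ∃ p : Matrix (Fin 3) (Fin 3) 𝕂, x = z4Mat p := by
  have ⟨_, h22, h33, h45, h54, _⟩ := hx
  refine ⟨x.submatrix (Fin.castLE (by norm_num)) (Fin.castLE (by norm_num)), ?_⟩
  ext i j
  fin_cases i <;> fin_cases j
  all_goals first
    | rfl
    | assumption
    | exact apply_eq_zero_of_mem_z4set hx (by decide)

theorem exists_eq_s42Mat_of_mem_S42 {g : Matrix (Fin 6) (Fin 6) 𝕂} (hg : g ∈ S42 𝕂) :
    ∃ a b : Matrix (Fin 2) (Fin 2) 𝕂, g = s42Mat a b := by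
  obtain ⟨a, b, -, rfl⟩ := hg
  refine ⟨a, b, ?_⟩
  ext i j
  fin_cases i <;> fin_cases j <;> rfl

end Membership

theorem z4_relative_stability {𝕂 : Type*} [RCLike 𝕂]
    (x : Matrix (Fin 6) (Fin 6) 𝕂) (hx : x ∈ z4set 𝕂) (hsym : x 0 2 = x 2 0)
    (g h : Matrix (Fin 6) (Fin 6) 𝕂) (hg : g ∈ S42 𝕂) (hh : h ∈ S42 𝕂)
    (hmem : g * x * hᵀ ∈ z4set 𝕂) :
    (g * x * hᵀ) 0 2 = (g * x * hᵀ) 2 0 := by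
  obtain ⟨p, rfl⟩ := exists_eq_z4Mat_of_mem_z4set hx
  obtain ⟨a, b, rfl⟩ := exists_eq_s42Mat_of_mem_S42 hg
  obtain ⟨c, d, rfl⟩ := exists_eq_s42Mat_of_mem_S42 hh
  have h23 := apply_eq_zero_of_mem_z4set hmem (i := 2) (j := 3) (by decide)
  have h32 := apply_eq_zero_of_mem_z4set hmem (i := 3) (j := 2) (by decide)
  have h33 := hmem.2.2.1
  simp only [s42Mat_mul_z4Mat_mul_transpose_apply_two_three,
    s42Mat_mul_z4Mat_mul_transpose_apply_three_two,
    s42Mat_mul_z4Mat_mul_transpose_apply_three_three] at h23 h32 h33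
  obtain ⟨ha, hc⟩ := eq_zero_and_eq_zero_of_mul_eq_one h23 h32 h33
  have hp : p 0 2 = p 2 0 := hsym
  rw [s42Mat_mul_z4Mat_mul_transpose_apply_zero_two,
    s42Mat_mul_z4Mat_mul_transpose_apply_two_zero, ha, hc, hp]
  ring
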